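/- Let g : ℝⁿ → ℝ be continuous and bounded, let η : [0,∞) → ℝ be continuous with η(t) ≤ −αt for all t ≥ 0 and some α > 0, let f : ℝⁿ → ℝ be continuous and bounded, and let Y_k → Y uniformly on compacts with hitting times τ(Y_k) → τ(Y) ∈ [0,∞] of the complement of the closure of an open set D (as above). Then ∫₀^{τ(Y_k)} f(Y_k(t)) e^{η(t)} dt → ∫₀^{τ(Y)} f(Y(t)) e^{η(t)} dt as k → ∞ (where the integral over [0,∞) is absolutely convergent since |f(Y(t))e^{η(t)}| ≤ ‖f‖_∞ e^{-αt}). -/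

import Mathlib

open Filter Topology MeasureTheory Real
open scoped ENNReal

/-- The exit time of a path `Z` from the closure of `D`, as an extended nonnegative real
(`∞` if the path never leaves `closure D`). -/
noncomputable def hitTime {n : ℕ} (D : Set (EuclideanSpace ℝ (Fin n)))
    (Z : ℝ → EuclideanSpace ℝ (Fin n)) : ℝ≥0∞ :=
  sInf (ENNReal.ofReal '' {t : ℝ | 0 ≤ t ∧ Z t ∉ closure D})

/-- The time interval `[0, τ)` for an extended-real time `τ` (all of `[0,∞)` if `τ = ∞`). -/
def timeSet (τ : ℝ≥0∞) : Set ℝ := {t : ℝ | 0 ≤ t ∧ ENNReal.ofReal t < τ}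

/-! Both integrals are integrals over `[0, ∞)` of the integrand times the indicator of
`[0, τ)`. When `τ_k → τ`, these indicators converge at every `t` except `t = τ`, a single
point, and the integrands are dominated by `‖f‖_∞ e^{-αt}`; dominated convergence concludes. -/

theorem timeSet_subset_Ici (τ : ℝ≥0∞) : timeSet τ ⊆ Set.Ici 0 := fun _ ht => ht.1

theorem measurableSet_timeSet (τ : ℝ≥0∞) : MeasurableSet (timeSet τ) :=
  measurableSet_Ici.inter (ENNReal.measurable_ofReal measurableSet_Iio)

theorem ae_eventually_mem_timeSet_iff {ι : Type*} {l : Filter ι} {σ : ι → ℝ≥0∞} {τ : ℝ≥0∞}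
    (hσ : Tendsto σ l (𝓝 τ)) :
    ∀ᵐ t : ℝ, ∀ᶠ k in l, (t ∈ timeSet (σ k) ↔ t ∈ timeSet τ) := by
  have hnull : volume {t : ℝ | 0 ≤ t ∧ ENNReal.ofReal t = τ} = 0 :=
    Set.Subsingleton.measure_zero
      (fun a ha b hb => (ENNReal.ofReal_eq_ofReal_iff ha.1 hb.1).1 (ha.2.trans hb.2.symm)) _
  filter_upwards [measure_eq_zero_iff_ae_notMem.1 hnull] with t ht
  by_cases h0 : 0 ≤ t
  · rcases lt_or_gt_of_ne fun h => ht ⟨h0, h⟩ with hlt | hgt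
    · filter_upwards [hσ.eventually (eventually_gt_nhds hlt)] with k hk
      exact iff_of_true ⟨h0, hk⟩ ⟨h0, hlt⟩
    · filter_upwards [hσ.eventually (eventually_lt_nhds hgt)] with k hk
      exact iff_of_false (fun h => h.2.not_gt hk) (fun h => h.2.not_gt hgt)
  · exact Eventually.of_forall fun _ => iff_of_false (fun h => h0 h.1) (fun h => h0 h.1)

theorem tendsto_setIntegral_timeSet_of_dominated {ι E : Type*} [NormedAddCommGroup E]
    [NormedSpace ℝ E] {l : Filter ι} [l.IsCountablyGenerated] {F : ι → ℝ → E} {G : ℝ → E}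
    {σ : ι → ℝ≥0∞} {τ : ℝ≥0∞} (bound : ℝ → ℝ) (hF_meas : ∀ k, AEStronglyMeasurable (F k))
    (h_int : IntegrableOn bound (Set.Ici 0)) (h_bound : ∀ k, ∀ t ≥ 0, ‖F k t‖ ≤ bound t)
    (h_lim : ∀ t ≥ 0, Tendsto (F · t) l (𝓝 (G t))) (hσ : Tendsto σ l (𝓝 τ)) :
    Tendsto (fun k => ∫ t in timeSet (σ k), F k t) l (𝓝 (∫ t in timeSet τ, G t)) := by
  simp_rw [← integral_indicator (measurableSet_timeSet _)]
  refine tendsto_integral_filter_of_dominated_convergence ((Set.Ici 0).indicator bound)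
    (Eventually.of_forall fun k => (hF_meas k).indicator (measurableSet_timeSet _))
    (Eventually.of_forall fun k => Eventually.of_forall fun t => ?_)
    ((integrable_indicator_iff measurableSet_Ici).2 h_int) ?_
  · calc ‖(timeSet (σ k)).indicator (F k) t‖
        ≤ ‖(Set.Ici 0).indicator (F k) t‖ :=
          norm_indicator_le_of_subset (timeSet_subset_Ici _) _ _
      _ = (Set.Ici 0).indicator (‖F k ·‖) t := norm_indicator_eq_indicator_norm _ _
      _ ≤ (Set.Ici 0).indicator bound t := Set.indicator_le_indicator' (h_bound k t)
  · filter_upwards [ae_eventually_mem_timeSet_iff hσ] with t ht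
    by_cases hτt : t ∈ timeSet τ
    · rw [Set.indicator_of_mem hτt]
      refine (h_lim t hτt.1).congr' ?_
      filter_upwards [ht] with k hk
      rw [Set.indicator_of_mem (hk.2 hτt)]
    · rw [Set.indicator_of_notMem hτt]
      refine tendsto_const_nhds.congr' ?_
      filter_upwards [ht] with k hk
      rw [Set.indicator_of_notMem (mt hk.1 hτt)]

theorem killed_integrals_converge_general
    (n : ℕ) (D : Set (EuclideanSpace ℝ (Fin n)))
    (α : ℝ) (hα : 0 < α)
    (η : ℝ → ℝ) (hηc : Continuous η) (hη : ∀ t ≥ (0:ℝ), η t ≤ -α * t)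
    (f : EuclideanSpace ℝ (Fin n) → ℝ) (hfc : Continuous f)
    (Cf : ℝ) (hfb : ∀ x, |f x| ≤ Cf)
    (Y : ℕ → ℝ → EuclideanSpace ℝ (Fin n)) (Ylim : ℝ → EuclideanSpace ℝ (Fin n))
    (hYc : ∀ k, Continuous (Y k))
    (hconv : ∀ K : Set ℝ, IsCompact K → TendstoUniformlyOn (fun k => Y k) Ylim atTop K)
    (hτ : Tendsto (fun k => hitTime D (Y k)) atTop (𝓝 (hitTime D Ylim))) :
    Tendsto (fun k => ∫ t in timeSet (hitTime D (Y k)), f (Y k t) * exp (η t)) atTop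
      (𝓝 (∫ t in timeSet (hitTime D Ylim), f (Ylim t) * exp (η t))) := by
  have hCf : 0 ≤ Cf := (abs_nonneg _).trans (hfb 0)
  refine tendsto_setIntegral_timeSet_of_dominated (fun t => Cf * exp (-α * t))
    (fun k => ((hfc.comp (hYc k)).mul (continuous_exp.comp hηc)).aestronglyMeasurable)
    ?_ (fun k t ht => ?_) (fun t _ => ?_) hτ
  · rw [integrableOn_Ici_iff_integrableOn_Ioi]
    exact (exp_neg_integrableOn_Ioi 0 hα).const_mul Cf
  · rw [norm_mul, Real.norm_eq_abs, Real.norm_eq_abs, abs_exp]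
    exact mul_le_mul (hfb _) (exp_le_exp.2 (hη t ht)) (exp_nonneg _) hCf
  · exact ((hfc.tendsto _).comp ((hconv {t} isCompact_singleton).tendsto_at rfl)).mul_const _

/-- For bounded continuous `f`, continuous `η` with `η(t) ≤ -α t`, and
continuous paths `Y_k → Y` uniformly on compacts whose exit times of `closure D` converge
(possibly to `∞`), the killed integrals converge:
`∫₀^{τ(Y_k)} f(Y_k(t)) e^{η(t)} dt → ∫₀^{τ(Y)} f(Y(t)) e^{η(t)} dt`. -/
theorem killed_integrals_converge
    (n : ℕ) (D : Set (EuclideanSpace ℝ (Fin n))) (hD : IsOpen D)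
    (α : ℝ) (hα : 0 < α)
    (η : ℝ → ℝ) (hηc : Continuous η) (hη : ∀ t ≥ (0:ℝ), η t ≤ -α * t)
    (f : EuclideanSpace ℝ (Fin n) → ℝ) (hfc : Continuous f)
    (Cf : ℝ) (hfb : ∀ x, |f x| ≤ Cf)
    (Y : ℕ → ℝ → EuclideanSpace ℝ (Fin n)) (Ylim : ℝ → EuclideanSpace ℝ (Fin n))
    (hYc : ∀ k, Continuous (Y k)) (hYlc : Continuous Ylim)
    (hconv : ∀ K : Set ℝ, IsCompact K → TendstoUniformlyOn (fun k => Y k) Ylim atTop K)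
    (hτ : Tendsto (fun k => hitTime D (Y k)) atTop (𝓝 (hitTime D Ylim))) :
    Tendsto (fun k => ∫ t in timeSet (hitTime D (Y k)), f (Y k t) * exp (η t)) atTop
      (𝓝 (∫ t in timeSet (hitTime D Ylim), f (Ylim t) * exp (η t))) :=
  killed_integrals_converge_general n D α hα η hηc hη f hfc Cf hfb Y Ylim hYc hconv hτ
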